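/- With n'(x) the index satisfying #(n'(x)) ≤ x < #(n'(x)+1), the function log_#(x) = log(#(n'(x))) is asymptotically equivalent to log(x), i.e., lim_{x→∞} log(#(n'(x)))/log(x) = 1. -/

import Mathlib

/-!
Write `n = n'(x)`. Then `log #(n) ≤ log x < log #(n+1) = log #(n) + log p_{n+1}`, so it suffices
that `log p_{n+1} = o(log #(n))`. Bertrand's postulate gives `p_{n+1} ≤ 2^{n+1}`, while
`p_i ≥ i + 1` gives `#(n) ≥ (n+1)!`, whose logarithm is at least `(n+1)(log (n+1) - 1)` by Stirling.
-/

open Filter Real Finset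

/-- The n-th prime number, 1-indexed: `p 1 = 2`, `p 2 = 3`, ... -/
noncomputable def p (n : ℕ) : ℕ := Nat.nth Nat.Prime (n - 1)

/-- The n-th primorial: `primor n = ∏_{i=1}^n p i`. -/
noncomputable def primor (n : ℕ) : ℕ := ∏ i ∈ Finset.Icc 1 n, p i

open scoped Topology Nat

theorem Nat.nth_prime_succ_le_two_mul (k : ℕ) :
    Nat.nth Nat.Prime (k + 1) ≤ 2 * Nat.nth Nat.Prime k := by
  obtain ⟨q, hq, hlt, hle⟩ :=
    Nat.exists_prime_lt_and_le_two_mul _ (Nat.prime_nth_prime k).ne_zero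
  refine le_trans (not_lt.1 fun h => ?_) hle
  exact hlt.not_ge (Nat.le_nth_of_lt_nth_succ h hq)

lemma p_succ_le_two_pow (n : ℕ) : p (n + 1) ≤ 2 ^ (n + 1) := by
  induction n with
  | zero => simp [p, Nat.nth_prime_zero_eq_two]
  | succ n ih =>
    calc p (n + 2) ≤ 2 * p (n + 1) := Nat.nth_prime_succ_le_two_mul n
      _ ≤ 2 ^ (n + 2) := by rw [pow_succ']; omega

lemma add_one_le_p (n : ℕ) : n + 1 ≤ p n := by
  have := Nat.add_two_le_nth_prime (n - 1)
  unfold p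
  omega

lemma primor_zero : primor 0 = 1 := by simp [primor]

lemma primor_succ (n : ℕ) : primor (n + 1) = primor n * p (n + 1) :=
  Finset.prod_Icc_succ_top (by omega) p

lemma primor_pos (n : ℕ) : 0 < primor n :=
  Finset.prod_pos fun i _ => (Nat.prime_nth_prime (i - 1)).pos

lemma primor_strictMono : StrictMono primor :=
  strictMono_nat_of_lt_succ fun n => by
    rw [primor_succ]
    exact lt_mul_of_one_lt_right (primor_pos n) (Nat.prime_nth_prime n).one_lt

lemma one_lt_primor {n : ℕ} (hn : n ≠ 0) : 1 < primor n :=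
  primor_zero ▸ primor_strictMono (Nat.pos_of_ne_zero hn)

lemma factorial_le_primor (n : ℕ) : (n + 1)! ≤ primor n := by
  induction n with
  | zero => simp [primor_zero]
  | succ n ih =>
    rw [Nat.factorial_succ, primor_succ, mul_comm]
    exact Nat.mul_le_mul ih (add_one_le_p (n + 1))

lemma mul_log_sub_one_le_log_factorial (n : ℕ) : n * (log n - 1) ≤ log n ! := by
  rcases Nat.eq_zero_or_pos n with rfl | hn
  · simp
  have hstirling := Stirling.le_log_factorial_stirling hn.ne'
  have hlog_n : 0 ≤ log n := log_nonneg (by exact_mod_cast hn)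
  have hlog_two_pi : 0 ≤ log (2 * π) := log_nonneg (by nlinarith [pi_gt_three])
  nlinarith

lemma mul_log_sub_one_le_log_primor (n : ℕ) :
    (n + 1) * (log (n + 1) - 1) ≤ log (primor n) := by
  calc (n + 1) * (log (n + 1) - 1) ≤ log (n + 1)! := by
        exact_mod_cast mul_log_sub_one_le_log_factorial (n + 1)
    _ ≤ log (primor n) :=
        log_le_log (by positivity) (by exact_mod_cast factorial_le_primor n)

lemma log_p_succ_div_log_primor_le {n : ℕ} (hn : 0 < log (n + 1) - 1) :
    log (p (n + 1)) / log (primor n) ≤ log 2 / (log (n + 1) - 1) := by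
  have hnum : log (p (n + 1)) ≤ (n + 1) * log 2 := by
    calc log (p (n + 1)) ≤ log ((2 : ℝ) ^ (n + 1)) :=
          log_le_log (by exact_mod_cast (Nat.prime_nth_prime n).pos)
            (by exact_mod_cast p_succ_le_two_pow n)
      _ = (n + 1) * log 2 := by rw [log_pow]; push_cast; ring
  calc log (p (n + 1)) / log (primor n)
      ≤ (n + 1) * log 2 / ((n + 1) * (log (n + 1) - 1)) :=
        div_le_div₀ (by positivity) hnum (by positivity) (mul_log_sub_one_le_log_primor n)
    _ = log 2 / (log (n + 1) - 1) := mul_div_mul_left _ _ (by positivity)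

lemma tendsto_log_p_succ_div_log_primor :
    Tendsto (fun n => log (p (n + 1)) / log (primor n)) atTop (𝓝 0) := by
  have hlog : Tendsto (fun n : ℕ => log (n + 1) - 1) atTop atTop :=
    tendsto_atTop_add_const_right _ _ <| tendsto_log_atTop.comp <|
      tendsto_atTop_add_const_right _ _ tendsto_natCast_atTop_atTop
  refine squeeze_zero' (Eventually.of_forall fun n => ?_) ?_ (hlog.const_div_atTop (log 2))
  · exact div_nonneg (log_nonneg (by exact_mod_cast (Nat.prime_nth_prime n).one_lt.le))
      (log_nonneg (by exact_mod_cast primor_pos n))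
  · filter_upwards [hlog.eventually_gt_atTop 0] with n hn
    exact log_p_succ_div_log_primor_le hn

lemma tendsto_log_primor_div_log_primor_succ :
    Tendsto (fun n => log (primor n) / log (primor (n + 1))) atTop (𝓝 1) := by
  have hratio : ∀ᶠ n in atTop, (1 + log (p (n + 1)) / log (primor n))⁻¹ =
      log (primor n) / log (primor (n + 1)) := by
    filter_upwards [eventually_ne_atTop 0] with n hn
    have hlog_pos : 0 < log (primor n) := log_pos (by exact_mod_cast one_lt_primor hn)
    have hp : (p (n + 1) : ℝ) ≠ 0 := by exact_mod_cast (Nat.prime_nth_prime n).ne_zero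
    rw [primor_succ, Nat.cast_mul, log_mul (Nat.cast_pos.2 (primor_pos n)).ne' hp]
    field_simp
  simpa using ((tendsto_const_nhds.add tendsto_log_p_succ_div_log_primor).inv₀
    (by norm_num)).congr' hratio

lemma tendsto_atTop_of_lt_primor_succ {α : Type*} {l : Filter α} {f : α → ℕ} {x : α → ℝ}
    (hx : Tendsto x l atTop) (hf : ∀ᶠ a in l, x a < primor (f a + 1)) :
    Tendsto f l atTop := by
  refine tendsto_atTop.2 fun N => ?_
  filter_upwards [hx.eventually_ge_atTop (primor (N + 1) : ℝ), hf] with a hle hlt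
  have : N + 1 < f a + 1 :=
    primor_strictMono.lt_iff_lt.1 (by exact_mod_cast hle.trans_lt hlt)
  omega

theorem stmt_12 (n' : ℝ → ℕ)
    (hn' : ∀ x : ℝ, 2 ≤ x → ((primor (n' x) : ℝ) ≤ x ∧ x < (primor (n' x + 1) : ℝ))) :
    Tendsto (fun x : ℝ => Real.log (primor (n' x)) / Real.log x) atTop (nhds 1) := by
  have hbounds : ∀ᶠ x in atTop, (primor (n' x) : ℝ) ≤ x ∧ x < primor (n' x + 1) :=
    eventually_ge_atTop 2 |>.mono hn'
  have hn'_top : Tendsto n' atTop atTop :=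
    tendsto_atTop_of_lt_primor_succ tendsto_id (hbounds.mono fun _ h => h.2)
  refine tendsto_of_tendsto_of_tendsto_of_le_of_le'
    (tendsto_log_primor_div_log_primor_succ.comp hn'_top) tendsto_const_nhds ?_ ?_
  · filter_upwards [hbounds, eventually_gt_atTop 1] with x ⟨_, hlt⟩ hx
    exact div_le_div_of_nonneg_left (log_nonneg (by exact_mod_cast primor_pos _))
      (log_pos hx) (log_le_log (by linarith) hlt.le)
  · filter_upwards [hbounds, eventually_gt_atTop 1] with x ⟨hle, _⟩ hx
    exact div_le_one_of_le₀ (log_le_log (by exact_mod_cast primor_pos _) hle)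
      (log_nonneg hx.le)
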